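/- arXiv:1301.2648 — 2 statements merged into one kernel-verified Lean document; each statement's English description precedes it below -/
import Mathlib

section
/- Let p_i, p_j, p_k be non-collinear points in ℝ² and suppose p_l satisfies ‖p_l − p_j‖ = ‖p_i − p_k‖, ‖p_l − p_k‖ = ‖p_i − p_j‖, and ‖p_l − p_i‖² = 2‖p_i − p_j‖² + 2‖p_i − p_k‖² − ‖p_j − p_k‖². Then p_l = p_j + p_k − p_i. -/
/-!
Put `u = pj - pi`, `v = pk - pi`, `w = pl - pi`. By the parallelogram law the third condition says
`‖w‖ = ‖u + v‖`. Expanding `‖w - (u + v)‖²` and using the first two conditions, which read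
`‖w - u‖ = ‖v‖` and `‖w - v‖ = ‖u‖`, it reduces to `‖u + v‖² - ‖w‖² = 0`.
-/

open scoped RealInnerProductSpace

section

variable {V : Type*} [NormedAddCommGroup V] [InnerProductSpace ℝ V]

theorem eq_add_of_norm_sub_eq_of_norm_eq {u v w : V} (hu : ‖w - u‖ = ‖v‖) (hv : ‖w - v‖ = ‖u‖)
    (hw : ‖w‖ = ‖u + v‖) : w = u + v := by
  have hu' := norm_sub_sq_real w u
  have hv' := norm_sub_sq_real w v
  have huv := norm_add_sq_real u v
  rw [hu] at hu'
  rw [hv] at hv'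
  rw [hw] at hu' hv'
  have : ‖w - (u + v)‖ ^ 2 = 0 := by
    rw [norm_sub_sq_real, inner_add_right, hw]
    linarith
  simpa [sub_eq_zero] using this

theorem norm_add_sq_eq_parallelogram (u v : V) :
    ‖u + v‖ ^ 2 = 2 * ‖u‖ ^ 2 + 2 * ‖v‖ ^ 2 - ‖u - v‖ ^ 2 := by
  have := parallelogram_law_with_norm ℝ u v
  nlinarith

end

theorem stmt_10_general (pi pj pk pl : EuclideanSpace ℝ (Fin 2))
    (h1 : ‖pl - pj‖ = ‖pi - pk‖)
    (h2 : ‖pl - pk‖ = ‖pi - pj‖)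
    (h3 : ‖pl - pi‖ ^ 2 = 2 * ‖pi - pj‖ ^ 2 + 2 * ‖pi - pk‖ ^ 2 - ‖pj - pk‖ ^ 2) :
    pl = pj + pk - pi := by
  have hw : ‖pl - pi‖ = ‖(pj - pi) + (pk - pi)‖ := by
    rw [← sq_eq_sq₀ (norm_nonneg _) (norm_nonneg _), norm_add_sq_eq_parallelogram, h3,
      ← norm_neg (pj - pi), ← norm_neg (pk - pi), sub_sub_sub_cancel_right]
    simp only [neg_sub]
  have key := eq_add_of_norm_sub_eq_of_norm_eq (u := pj - pi) (v := pk - pi) (w := pl - pi)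
    (by rw [sub_sub_sub_cancel_right, h1, ← norm_neg, neg_sub])
    (by rw [sub_sub_sub_cancel_right, h2, ← norm_neg, neg_sub]) hw
  rw [sub_eq_iff_eq_add] at key
  rw [key]
  abel

/-- The three distance conditions uniquely pin down the parallelogram point. -/
theorem stmt_10 (pi pj pk pl : EuclideanSpace ℝ (Fin 2))
    (h : AffineIndependent ℝ ![pi, pj, pk])
    (h1 : ‖pl - pj‖ = ‖pi - pk‖)
    (h2 : ‖pl - pk‖ = ‖pi - pj‖)
    (h3 : ‖pl - pi‖ ^ 2 = 2 * ‖pi - pj‖ ^ 2 + 2 * ‖pi - pk‖ ^ 2 - ‖pj - pk‖ ^ 2) :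
    pl = pj + pk - pi :=
  stmt_10_general pi pj pk pl h1 h2 h3
end

section
/- Let p_i, p_j, p_k be non-collinear points in ℝ² and suppose p_l ≠ p_j + p_k − p_i satisfies ‖p_l − p_j‖ = ‖p_i − p_k‖ and ‖p_l − p_k‖ = ‖p_i − p_j‖. Then ‖p_l − p_i‖ ≠ ‖(p_j + p_k − p_i) − p_i‖. -/
/-!
Put `q = p_j + p_k - p_i`. The pairs `{p_i, q}` and `{p_j, p_k}` have the same midpoint, so
`x ↦ ‖x - p_i‖² + ‖x - q‖² - ‖x - p_j‖² - ‖x - p_k‖²` is constant. Comparing its values at `p_l`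
and at `p_i` shows that a point with the prescribed distances to `p_j`, `p_k` and `p_i` has
`‖p_l - q‖ = 0`.
-/

section

variable {V : Type*} [NormedAddCommGroup V] [InnerProductSpace ℝ V]

theorem norm_sub_sq_add_norm_sub_sq_sub_eq_of_add_eq {a b c d : V} (hsum : a + b = c + d)
    (x y : V) :
    ‖x - a‖ ^ 2 + ‖x - b‖ ^ 2 - (‖x - c‖ ^ 2 + ‖x - d‖ ^ 2) =
      ‖y - a‖ ^ 2 + ‖y - b‖ ^ 2 - (‖y - c‖ ^ 2 + ‖y - d‖ ^ 2) := by
  obtain rfl : d = a + b - c := eq_sub_of_add_eq' hsum.symm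
  simp only [← real_inner_self_eq_norm_sq, inner_sub_left, inner_sub_right, inner_add_left,
    inner_add_right, real_inner_comm]
  ring

theorem eq_add_sub_of_norm_sub_eq {a b c x : V} (hb : ‖x - b‖ = ‖a - c‖)
    (hc : ‖x - c‖ = ‖a - b‖) (ha : ‖x - a‖ = ‖(b + c - a) - a‖) :
    x = b + c - a := by
  have hconst := norm_sub_sq_add_norm_sub_sq_sub_eq_of_add_eq
    (add_sub_cancel a (b + c)).symm x a
  rw [hb, hc, ha, sub_self, norm_zero, norm_sub_rev a (b + c - a)] at hconst
  have hzero : ‖x - (b + c - a)‖ ^ 2 = 0 := by linarith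
  exact sub_eq_zero.mp (norm_eq_zero.mp (pow_eq_zero_iff two_ne_zero |>.mp hzero))

end

theorem stmt_11_general (pi pj pk pl : EuclideanSpace ℝ (Fin 2))
    (hne : pl ≠ pj + pk - pi)
    (h1 : ‖pl - pj‖ = ‖pi - pk‖)
    (h2 : ‖pl - pk‖ = ‖pi - pj‖) :
    ‖pl - pi‖ ≠ ‖(pj + pk - pi) - pi‖ :=
  fun hdist => hne (eq_add_sub_of_norm_sub_eq h1 h2 hdist)

/-- The second intersection point of the two circles has a different distance
to p_i than the parallelogram point. -/
theorem stmt_11 (pi pj pk pl : EuclideanSpace ℝ (Fin 2))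
    (h : AffineIndependent ℝ ![pi, pj, pk])
    (hne : pl ≠ pj + pk - pi)
    (h1 : ‖pl - pj‖ = ‖pi - pk‖)
    (h2 : ‖pl - pk‖ = ‖pi - pj‖) :
    ‖pl - pi‖ ≠ ‖(pj + pk - pi) - pi‖ :=
  stmt_11_general pi pj pk pl hne h1 h2
end
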